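/- arXiv:2512.19587 — 4 statements merged into one kernel-verified Lean document; each statement's English description precedes it below -/
import Mathlib

section
/- If Φ: ℝ^m → ℝ^n is differentiable and its first fundamental form satisfies G(u) = (DΦ(u))ᵀ(DΦ(u)) = λ(u)²·I_m for a rational function λ, then for every PH curve r: ℝ → ℝ^m the composed curve Φ ∘ r satisfies ‖(Φ ∘ r)'(t)‖² = (λ(r(t))·σ(t))², i.e. Φ ∘ r is PH. -/
theorem norm_sq_deriv_comp_of_norm_sq_fderiv_eq
    {E F : Type*} [NormedAddCommGroup E] [NormedSpace ℝ E]
    [NormedAddCommGroup F] [NormedSpace ℝ F]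
    {Φ : E → F} {r : ℝ → E} {t c : ℝ}
    (hΦ : DifferentiableAt ℝ Φ (r t)) (hr : DifferentiableAt ℝ r t)
    (hG : ∀ v, ‖fderiv ℝ Φ (r t) v‖ ^ 2 = c * ‖v‖ ^ 2) :
    ‖deriv (Φ ∘ r) t‖ ^ 2 = c * ‖deriv r t‖ ^ 2 := by
  rw [fderiv_comp_deriv t hΦ hr, hG]

theorem stmt_2_general {m n : ℕ}
    (Φ : EuclideanSpace ℝ (Fin m) → EuclideanSpace ℝ (Fin n))
    (hΦ : Differentiable ℝ Φ)
    (lam : EuclideanSpace ℝ (Fin m) → ℝ)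
    (hG : ∀ u v, ‖fderiv ℝ Φ u v‖ ^ 2 = lam u ^ 2 * ‖v‖ ^ 2)
    (r : ℝ → EuclideanSpace ℝ (Fin m)) (hr : Differentiable ℝ r)
    (σ : ℝ → ℝ)
    (hPH : ∀ t : ℝ, ‖deriv r t‖ ^ 2 = σ t ^ 2) :
    ∀ t : ℝ, ‖deriv (Φ ∘ r) t‖ ^ 2 = (lam (r t) * σ t) ^ 2 := by
  intro t
  rw [norm_sq_deriv_comp_of_norm_sq_fderiv_eq (hΦ (r t)) (hr t) (hG (r t)), hPH, mul_pow]

/-- If `Φ` is differentiable with first fundamental form `G(u) = λ(u)²·I_m`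
(equivalently `‖DΦ(u)v‖² = λ(u)²‖v‖²` for all directions `v`), with `λ` a rational
function, then the image of any PH curve `r` (with `‖r'(t)‖² = σ(t)²`, `σ` rational)
satisfies `‖(Φ∘r)'(t)‖² = (λ(r(t))·σ(t))²`, i.e. `Φ∘r` is PH. -/
theorem stmt_2 {m n : ℕ}
    (Φ : EuclideanSpace ℝ (Fin m) → EuclideanSpace ℝ (Fin n))
    (hΦ : Differentiable ℝ Φ)
    (lam : EuclideanSpace ℝ (Fin m) → ℝ)
    (hlam_rat : ∃ p q : MvPolynomial (Fin m) ℝ, q ≠ 0 ∧ ∀ u : EuclideanSpace ℝ (Fin m),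
      lam u * MvPolynomial.eval (fun i => u i) q = MvPolynomial.eval (fun i => u i) p)
    (hG : ∀ u v, ‖fderiv ℝ Φ u v‖ ^ 2 = lam u ^ 2 * ‖v‖ ^ 2)
    (r : ℝ → EuclideanSpace ℝ (Fin m)) (hr : Differentiable ℝ r)
    (σ : ℝ → ℝ)
    (hσ_rat : ∃ p q : Polynomial ℝ, q ≠ 0 ∧ ∀ t : ℝ, σ t * q.eval t = p.eval t)
    (hPH : ∀ t : ℝ, ‖deriv r t‖ ^ 2 = σ t ^ 2) :
    ∀ t : ℝ, ‖deriv (Φ ∘ r) t‖ ^ 2 = (lam (r t) * σ t) ^ 2 :=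
  stmt_2_general Φ hΦ lam hG r hr σ hPH
end

section
/- Let f(x,y) ∈ ℝ[x,y] be a polynomial in two variables such that for every y₀ ∈ ℝ the one-variable polynomial x ↦ f(x, y₀) is a square in ℝ[x]. Then there exist g ∈ ℝ[y] and h ∈ ℝ[x,y] such that f(x,y) = g(y)·h(x,y)². -/
/-!
Induct on the degree of `f` in `x`. A nonconstant `f` has an irreducible factor `q` of positive
degree in `x`; write `f = q * m`. If `q ∣ m`, then `f = q² f₂`, and `f₂` again specializes to
squares (cancel `q(·, y₀)²` in the integrally closed ring `ℝ[x]`), so induction applies.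
Otherwise, by Gauss's lemma `q` stays irreducible over `ℝ(y)`, hence is separable and coprime to
`m` there. Clearing denominators in the two Bézout identities shows that for all but finitely many
`y₀` the specialization `q₀ = q(·, y₀)` is still squarefree, nonconstant and coprime to
`m₀ = m(·, y₀)`. But if `q₀ m₀ = p²`, squarefreeness gives `q₀ ∣ p`, hence `q₀ ∣ m₀`.
-/

open Polynomial Filter
open scoped nonZeroDivisors

section SquareFactors

variable {R : Type*} [CommRing R] [IsDomain R]

theorem exists_eq_sq_of_sq_mul_eq_sq [IsIntegrallyClosed R] {a b p : R} (ha : a ≠ 0)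
    (h : a ^ 2 * b = p ^ 2) : ∃ r, b = r ^ 2 := by
  obtain ⟨r, rfl⟩ := (IsIntegrallyClosed.pow_dvd_pow_iff two_ne_zero).mp ⟨b, h.symm⟩
  exact ⟨r, mul_left_cancel₀ (pow_ne_zero 2 ha) (by rw [h]; ring)⟩

theorem IsCoprime.isUnit_of_squarefree_of_mul_eq_sq [DecompositionMonoid R] {q m p : R}
    (hcop : IsCoprime q m) (hq : Squarefree q) (h : q * m = p ^ 2) : IsUnit q := by
  obtain ⟨t, rfl⟩ := (hq.dvd_pow_iff_dvd two_ne_zero).mp ⟨m, h.symm⟩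
  have hm : m = q * t ^ 2 := mul_left_cancel₀ hq.ne_zero (by rw [h]; ring)
  exact hcop.isUnit_of_dvd' dvd_rfl ⟨_, hm⟩

end SquareFactors

theorem Polynomial.exists_irreducible_dvd_of_natDegree_pos {R : Type*} [CommRing R] [IsDomain R]
    [WfDvdMonoid R[X]] {f : R[X]} (hf : 0 < f.natDegree) :
    ∃ q, Irreducible q ∧ q ∣ f ∧ 0 < q.natDegree := by
  induction f using WfDvdMonoid.induction_on_irreducible with
  | zero => simp at hf
  | unit u hu => simp [natDegree_eq_zero_of_isUnit hu] at hf
  | mul a i ha hi ih =>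
    rw [natDegree_mul hi.ne_zero ha] at hf
    rcases Nat.eq_zero_or_pos i.natDegree with hi0 | hi0
    · obtain ⟨q, hq, hqa, hqdeg⟩ := ih (by omega)
      exact ⟨q, hq, hqa.mul_left i, hqdeg⟩
    · exact ⟨i, hi, dvd_mul_right i a, hi0⟩

theorem Polynomial.exists_mul_add_mul_eq_C_of_isCoprime_map {R K : Type*} [CommRing R]
    [IsDomain R] [Field K] [Algebra R K] [IsFractionRing R K] {a b : R[X]}
    (h : IsCoprime (a.map (algebraMap R K)) (b.map (algebraMap R K))) :
    ∃ d ≠ 0, ∃ u v : R[X], u * a + v * b = C d := by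
  obtain ⟨u, v, huv⟩ := h
  obtain ⟨du, hdu0, hdu⟩ := IsLocalization.integerNormalization_spec R⁰ u
  obtain ⟨dv, hdv0, hdv⟩ := IsLocalization.integerNormalization_spec R⁰ v
  refine ⟨dv * du, mul_ne_zero (nonZeroDivisors.ne_zero hdv0) (nonZeroDivisors.ne_zero hdu0),
    C dv * IsLocalization.integerNormalization R⁰ u,
    C du * IsLocalization.integerNormalization R⁰ v, ?_⟩
  apply map_injective (algebraMap R K) (IsFractionRing.injective R K)
  rw [Algebra.smul_def, algebraMap_apply] at hdu hdv
  simp only [Polynomial.map_add, Polynomial.map_mul, map_C, hdu, hdv, map_mul]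
  linear_combination (C (algebraMap R K dv) * C (algebraMap R K du)) * huv

section Specialization

variable {k : Type*} [Field k]

local notation "φ" => algebraMap k[X] (FractionRing k[X])

theorem Polynomial.eventually_cofinite_eval_ne_zero {d : k[X]} (hd : d ≠ 0) :
    ∀ᶠ y in cofinite, d.eval y ≠ 0 := by
  rw [eventually_cofinite]
  simpa only [not_not, IsRoot.def] using d.finite_setOfPred_isRoot hd

theorem Polynomial.eventually_natDegree_map_evalRingHom (q : k[X][X]) :
    ∀ᶠ y in cofinite, (q.map (evalRingHom y)).natDegree = q.natDegree := by
  rcases eq_or_ne q 0 with rfl | hq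
  · simp
  filter_upwards [eventually_cofinite_eval_ne_zero (leadingCoeff_ne_zero.mpr hq)] with y hy
  exact natDegree_map_of_leadingCoeff_ne_zero _ hy

theorem Polynomial.eventually_isCoprime_map_evalRingHom {a b : k[X][X]}
    (h : IsCoprime (a.map φ) (b.map φ)) :
    ∀ᶠ y in cofinite, IsCoprime (a.map (evalRingHom y)) (b.map (evalRingHom y)) := by
  obtain ⟨d, hd, u, v, huv⟩ := exists_mul_add_mul_eq_C_of_isCoprime_map h
  filter_upwards [eventually_cofinite_eval_ne_zero hd] with y hy
  refine ⟨C (d.eval y)⁻¹ * u.map (evalRingHom y), C (d.eval y)⁻¹ * v.map (evalRingHom y), ?_⟩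
  have huv_y := congrArg (map (evalRingHom y)) huv
  simp only [Polynomial.map_add, Polynomial.map_mul, map_C, coe_evalRingHom] at huv_y
  rw [mul_assoc, mul_assoc, ← mul_add, huv_y, ← C_mul, inv_mul_cancel₀ hy, C_1]

theorem Polynomial.not_eventually_map_mul_eq_sq [CharZero k] {q m : k[X][X]} (hq : Irreducible q)
    (hdeg : 0 < q.natDegree) (hqm : ¬q ∣ m) :
    ¬∀ᶠ y in cofinite, ∃ p, (q * m).map (evalRingHom y) = p ^ 2 := by
  have hprim := hq.isPrimitive hdeg.ne'
  have hqK : Irreducible (q.map φ) := hprim.irreducible_iff_irreducible_map_fraction_map.mp hq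
  have hcop : IsCoprime (q.map φ) (m.map φ) := hqK.coprime_iff_not_dvd.mpr
    (by rwa [← hprim.dvd_iff_fraction_map_dvd_fraction_map (FractionRing k[X])])
  have hsep : IsCoprime (q.map φ) ((derivative q).map φ) := by
    rw [← derivative_map]
    exact hqK.separable
  intro hsq
  obtain ⟨y, ⟨p, hp⟩, hcop_y, hsep_y, hdeg_y⟩ := (hsq.and <|
    (eventually_isCoprime_map_evalRingHom hcop).and <|
    (eventually_isCoprime_map_evalRingHom hsep).and (eventually_natDegree_map_evalRingHom q)).exists
  rw [Polynomial.map_mul] at hp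
  have hsqfree : Squarefree (q.map (evalRingHom y)) :=
    Separable.squarefree (by rwa [separable_def, derivative_map])
  exact not_isUnit_of_natDegree_pos _ (hdeg_y ▸ hdeg)
    (hcop_y.isUnit_of_squarefree_of_mul_eq_sq hsqfree hp)

theorem Polynomial.exists_eq_C_mul_sq_of_eventually_map_eq_sq [CharZero k] (f : k[X][X])
    (hf : ∀ᶠ y in cofinite, ∃ p, f.map (evalRingHom y) = p ^ 2) :
    ∃ (g : k[X]) (h : k[X][X]), f = C g * h ^ 2 := by
  induction hn : f.natDegree using Nat.strong_induction_on generalizing f with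
  | _ n ih =>
  rcases Nat.eq_zero_or_pos n with rfl | hpos
  · exact ⟨f.coeff 0, 1, by rw [one_pow, mul_one]; exact eq_C_of_natDegree_eq_zero hn⟩
  obtain ⟨q, hq, ⟨m, rfl⟩, hqdeg⟩ := exists_irreducible_dvd_of_natDegree_pos (hn ▸ hpos)
  by_cases hqm : q ∣ m
  · obtain ⟨f₂, rfl⟩ := hqm
    have hf₂ : ∀ᶠ y in cofinite, ∃ r, f₂.map (evalRingHom y) = r ^ 2 := by
      filter_upwards [hf, eventually_natDegree_map_evalRingHom q] with y ⟨p, hp⟩ hy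
      have hq_y : q.map (evalRingHom y) ≠ 0 := fun h0 => by rw [h0, natDegree_zero] at hy; omega
      refine exists_eq_sq_of_sq_mul_eq_sq (p := p) hq_y ?_
      rw [← hp, Polynomial.map_mul, Polynomial.map_mul]
      ring
    have hf₂0 : f₂ ≠ 0 := by rintro rfl; rw [mul_zero, mul_zero, natDegree_zero] at hn; omega
    have hdeg : f₂.natDegree < n := by
      rw [← hn, natDegree_mul hq.ne_zero (mul_ne_zero hq.ne_zero hf₂0),
        natDegree_mul hq.ne_zero hf₂0]
      omega
    obtain ⟨g, h, rfl⟩ := ih _ hdeg f₂ hf₂ rfl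
    exact ⟨g, q * h, by ring⟩
  · exact absurd hf (not_eventually_map_mul_eq_sq hq hqdeg hqm)

end Specialization

/-- If `f ∈ ℝ[x,y]` (viewed as a polynomial in `x` with coefficients in `ℝ[y]`)
specializes to a square in `ℝ[x]` for every `y₀ ∈ ℝ`, then `f = g(y)·h(x,y)²`
for some `g ∈ ℝ[y]` and `h ∈ ℝ[x,y]`. -/
theorem stmt_4 (f : Polynomial (Polynomial ℝ))
    (h : ∀ y₀ : ℝ, ∃ p : Polynomial ℝ, f.map (Polynomial.evalRingHom y₀) = p ^ 2) :
    ∃ (g : Polynomial ℝ) (h' : Polynomial (Polynomial ℝ)),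
      f = Polynomial.C g * h' ^ 2 :=
  exists_eq_C_mul_sq_of_eventually_map_eq_sq f (.of_forall h)
end

section
/- Let S = [[a, b], [b, c]] be a symmetric positive definite 2×2 real matrix, and let r(t) = (t² − 1, t(t² − 1)/√3) be the Tschirnhausen cubic. If the quartic polynomial P(t) = r'(t)ᵀ S r'(t) is the square of a polynomial in ℝ[t], then b = 0 and a = c, i.e. S is a positive scalar multiple of the identity. -/
/-!
Since `P` has degree at most 4, a square root `q = α t² + β t + γ` of it is quadratic, and comparing
coefficients gives `α² = 3c`, `γ² = c/3`, `αβ = 2√3 b`, `βγ = -2√3 b / 3` and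
`β² + 2αγ = 4a - 2c`. The two middle equations force `β (α + 3γ) = 0`. If `β = 0` then `b = 0`, and
`(αγ)² = c²` with `αγ = 2a - c` gives `a (a - c) = 0`. If `α = -3γ` then `β² = 4a`, so
`12 b² = (αβ)² = 12 ac`, contradicting `det S > 0`.
-/

open Polynomial

section QuadraticSquare

theorem exists_eq_quadratic_of_natDegree_sq_le_four {R : Type*} [Semiring R] [NoZeroDivisors R]
    {q : R[X]} (h : (q ^ 2).natDegree ≤ 4) : ∃ α β γ, q = C α * X ^ 2 + C β * X + C γ := by
  rw [natDegree_pow] at h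
  refine ⟨q.coeff 2, q.coeff 1, q.coeff 0, ?_⟩
  conv_lhs => rw [q.as_sum_range_C_mul_X_pow' (n := 3) (by omega)]
  simp only [Finset.sum_range_succ, Finset.sum_range_zero, pow_zero, pow_one, mul_one, zero_add]
  abel

variable {R : Type*} [CommRing R]

theorem quadratic_sq (α β γ : R) :
    (C α * X ^ 2 + C β * X + C γ) ^ 2 = C (α ^ 2) * X ^ 4 + C (2 * α * β) * X ^ 3
      + C (β ^ 2 + 2 * α * γ) * X ^ 2 + C (2 * β * γ) * X + C (γ ^ 2) := by
  simp only [map_add, map_mul, map_pow, map_ofNat]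
  ring

theorem quartic_coeffs_eq {a₄ a₃ a₂ a₁ a₀ b₄ b₃ b₂ b₁ b₀ : R}
    (h : C a₄ * X ^ 4 + C a₃ * X ^ 3 + C a₂ * X ^ 2 + C a₁ * X + C a₀ =
      C b₄ * X ^ 4 + C b₃ * X ^ 3 + C b₂ * X ^ 2 + C b₁ * X + C b₀) :
    a₄ = b₄ ∧ a₃ = b₃ ∧ a₂ = b₂ ∧ a₁ = b₁ ∧ a₀ = b₀ := by
  refine ⟨?_, ?_, ?_, ?_, ?_⟩ <;>
    [have := congrArg (coeff · 4) h; have := congrArg (coeff · 3) h;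
      have := congrArg (coeff · 2) h; have := congrArg (coeff · 1) h;
      have := congrArg (coeff · 0) h] <;>
    simpa [coeff_X, coeff_C] using this

end QuadraticSquare

/-- `P(t) = r'(t)ᵀ S r'(t)` for `S = [[a, b], [b, c]]` and `r'(t) = (2t, (3t² − 1)/√3)`. -/
noncomputable def tschirnhausenQuartic (a b c : ℝ) : ℝ[X] :=
  C (3 * c) * X ^ 4 + C (4 * √3 * b) * X ^ 3 + C (4 * a - 2 * c) * X ^ 2
    + C (-(4 * √3 / 3) * b) * X + C (c / 3)

theorem eval_tschirnhausenQuartic (a b c t : ℝ) :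
    (tschirnhausenQuartic a b c).eval t = a * (2 * t) ^ 2
      + 2 * b * (2 * t) * ((3 * t ^ 2 - 1) / √3) + c * ((3 * t ^ 2 - 1) / √3) ^ 2 := by
  have h3 : √3 ^ 2 = 3 := Real.sq_sqrt (by norm_num)
  simp only [tschirnhausenQuartic, eval_add, eval_mul, eval_pow, eval_C, eval_X]
  field_simp
  linear_combination (9 * c * t ^ 4 + 12 * √3 * b * t ^ 3 + 3 * (4 * a - 2 * c) * t ^ 2
    - 4 * √3 * b * t + c - 12 * a * t ^ 2) * h3

theorem natDegree_tschirnhausenQuartic_le (a b c : ℝ) :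
    (tschirnhausenQuartic a b c).natDegree ≤ 4 := by
  unfold tschirnhausenQuartic
  compute_degree

theorem eq_and_eq_of_quartic_coeffs {a b c s α β γ : ℝ} (hs : s ^ 2 = 3) (ha : a ≠ 0)
    (hdet : b ^ 2 ≠ a * c) (h₄ : 3 * c = α ^ 2) (h₃ : 4 * s * b = 2 * α * β)
    (h₂ : 4 * a - 2 * c = β ^ 2 + 2 * α * γ) (h₁ : -(4 * s / 3) * b = 2 * β * γ)
    (h₀ : c / 3 = γ ^ 2) :
    b = 0 ∧ a = c := by
  have hs0 : s ≠ 0 := by rintro rfl; norm_num at hs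
  have hβ : β * (α + 3 * γ) = 0 := by linear_combination (-1 / 2) * h₃ - (3 / 2) * h₁
  rcases mul_eq_zero.mp hβ with hβ | hαγ
  · subst hβ
    have hb : b = 0 := by simpa [hs0] using h₃
    refine ⟨hb, mul_left_cancel₀ ha ?_⟩
    linear_combination (2 * a - c + α * γ) / 8 * h₂ - α ^ 2 / 4 * h₀ - c / 12 * h₄
  · have hβ2 : β ^ 2 = 4 * a := by linear_combination -h₂ - 2 * γ * hαγ - 6 * h₀
    refine absurd ?_ hdet
    linear_combination
      ((2 * s * b + α * β) / 2 * h₃ - 4 * b ^ 2 * hs + α ^ 2 * hβ2 - 4 * a * h₄) / 12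

theorem stmt_6_general (a b c : ℝ) (ha : 0 < a) (hdet : 0 < a * c - b ^ 2)
    (hsq : ∃ q : Polynomial ℝ, ∀ t : ℝ,
      a * (2 * t) ^ 2 + 2 * b * (2 * t) * ((3 * t ^ 2 - 1) / Real.sqrt 3)
        + c * ((3 * t ^ 2 - 1) / Real.sqrt 3) ^ 2 = (q.eval t) ^ 2) :
    b = 0 ∧ a = c := by
  obtain ⟨q, hq⟩ := hsq
  have hP : tschirnhausenQuartic a b c = q ^ 2 :=
    Polynomial.funext fun t => by rw [eval_pow, ← hq, eval_tschirnhausenQuartic]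
  obtain ⟨α, β, γ, rfl⟩ :=
    exists_eq_quadratic_of_natDegree_sq_le_four (hP ▸ natDegree_tschirnhausenQuartic_le a b c)
  obtain ⟨h₄, h₃, h₂, h₁, h₀⟩ := quartic_coeffs_eq (hP.trans (quadratic_sq α β γ))
  exact eq_and_eq_of_quartic_coeffs (Real.sq_sqrt (by norm_num)) ha.ne' (by linarith) h₄ h₃ h₂ h₁ h₀

/-- If `S = [[a,b],[b,c]]` is symmetric positive definite and the quartic
`P(t) = r'(t)ᵀ S r'(t)` built from the Tschirnhausen cubic derivative
`r'(t) = (2t, (3t²−1)/√3)` is the square of a polynomial, then `b = 0` and `a = c`. -/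
theorem stmt_6 (a b c : ℝ) (ha : 0 < a) (hc : 0 < c) (hdet : 0 < a * c - b ^ 2)
    (hsq : ∃ q : Polynomial ℝ, ∀ t : ℝ,
      a * (2 * t) ^ 2 + 2 * b * (2 * t) * ((3 * t ^ 2 - 1) / Real.sqrt 3)
        + c * ((3 * t ^ 2 - 1) / Real.sqrt 3) ^ 2 = (q.eval t) ^ 2) :
    b = 0 ∧ a = c :=
  stmt_6_general a b c ha hdet hsq
end

section
/- Suppose real numbers a, b, c, α, β, γ satisfy α² = 3c, 2αβ = 4√3·b, 2αγ + β² = 4a − 2c, 2βγ = −(4√3/3)·b, γ² = c/3, and suppose the matrix [[a,b],[b,c]] is positive definite (a > 0, c > 0, ac − b² > 0). Then b = 0 and a = c. -/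
/-!
Multiplying the equations for `α²` and `γ²` gives `(αγ)² = c²`, and multiplying those for `2αβ`
and `2βγ` gives `αγ·β² = -4b²`. If `αγ = c`, then `c β² = -4 b²` with `c > 0` forces `b = β = 0`,
and the middle equation becomes `2c = 4a - 2c`. If `αγ = -c`, the middle equation gives `β² = 4a`,
so `4ac = c β² = 4b²`, contradicting `ac - b² > 0`.
-/

section QuarticSquare

variable {a b c α β γ : ℝ}

lemma mul_sq_eq_sq_of_sq_eq (h1 : α ^ 2 = 3 * c) (h5 : γ ^ 2 = c / 3) :
    (α * γ) ^ 2 = c ^ 2 := by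
  rw [mul_pow, h1, h5]
  ring

lemma mul_mul_sq_eq_neg_four_mul_sq (h2 : 2 * α * β = 4 * Real.sqrt 3 * b)
    (h4 : 2 * β * γ = -(4 * Real.sqrt 3 / 3) * b) :
    α * γ * β ^ 2 = -4 * b ^ 2 := by
  have hs : Real.sqrt 3 ^ 2 = 3 := Real.sq_sqrt (by norm_num)
  have h24 : (2 * α * β) * (2 * β * γ) = (4 * Real.sqrt 3 * b) * (-(4 * Real.sqrt 3 / 3) * b) := by
    rw [h2, h4]
  linear_combination h24 / 4 - 4 / 3 * b ^ 2 * hs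

lemma eq_zero_and_eq_of_mul_eq (h3 : 2 * α * γ + β ^ 2 = 4 * a - 2 * c)
    (hprod : α * γ * β ^ 2 = -4 * b ^ 2) (hc : 0 < c) (hαγ : α * γ = c) :
    b = 0 ∧ a = c := by
  rw [hαγ] at hprod
  have hb : b = 0 := by nlinarith [sq_nonneg β, sq_nonneg b]
  have hβ : β ^ 2 = 0 := by
    rw [hb] at hprod
    simpa [hc.ne'] using hprod
  exact ⟨hb, by linarith⟩

lemma mul_ne_neg (h3 : 2 * α * γ + β ^ 2 = 4 * a - 2 * c)
    (hprod : α * γ * β ^ 2 = -4 * b ^ 2) (hdet : 0 < a * c - b ^ 2) :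
    α * γ ≠ -c := by
  intro hαγ
  have hβ : β ^ 2 = 4 * a := by linarith
  rw [hαγ, hβ] at hprod
  linarith

end QuarticSquare

theorem stmt_7_general (a b c α β γ : ℝ)
    (h1 : α ^ 2 = 3 * c)
    (h2 : 2 * α * β = 4 * Real.sqrt 3 * b)
    (h3 : 2 * α * γ + β ^ 2 = 4 * a - 2 * c)
    (h4 : 2 * β * γ = -(4 * Real.sqrt 3 / 3) * b)
    (h5 : γ ^ 2 = c / 3)
    (hc : 0 < c) (hdet : 0 < a * c - b ^ 2) :
    b = 0 ∧ a = c := by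
  have hprod := mul_mul_sq_eq_neg_four_mul_sq h2 h4
  rcases sq_eq_sq_iff_eq_or_eq_neg.mp (mul_sq_eq_sq_of_sq_eq h1 h5) with hαγ | hαγ
  · exact eq_zero_and_eq_of_mul_eq h3 hprod hc hαγ
  · exact absurd hαγ (mul_ne_neg h3 hprod hdet)

/-- The coefficient system arising from `P(t) = (αt² + βt + γ)²` for the
Tschirnhausen quartic, together with positive definiteness of `[[a,b],[b,c]]`,
forces `b = 0` and `a = c`. -/
theorem stmt_7 (a b c α β γ : ℝ)
    (h1 : α ^ 2 = 3 * c)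
    (h2 : 2 * α * β = 4 * Real.sqrt 3 * b)
    (h3 : 2 * α * γ + β ^ 2 = 4 * a - 2 * c)
    (h4 : 2 * β * γ = -(4 * Real.sqrt 3 / 3) * b)
    (h5 : γ ^ 2 = c / 3)
    (ha : 0 < a) (hc : 0 < c) (hdet : 0 < a * c - b ^ 2) :
    b = 0 ∧ a = c :=
  stmt_7_general a b c α β γ h1 h2 h3 h4 h5 hc hdet
end
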